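/- arXiv:1908.10143 — 3 statements merged into one kernel-verified Lean document; each statement's English description precedes it below -/
import Mathlib

section
/- For every ε > 0 there exists a constant C(ε) > 0 such that for every odd prime q, every integer W with 1 ≤ W ≤ q, and all integers a and h with gcd(ah, q) = 1, one has | Σ_{w=1}^{W} Σ_{x ∈ F_q, x² = aw (mod q)} e_q(hx) | ≤ C(ε) q^{1/2+ε}. -/
/-!
Detecting `x² = a w` by orthogonality of additive characters turns `q` times the double sum
into `Σ_t G(t) E(t)`, with the quadratic Gauss sum `G(t) = Σ_x e_q(-t a⁻¹ x² + h x)` and the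
geometric sum `E(t) = Σ_{w ≤ W} e_q(t w)`. Since `h ≢ 0` we have `G(0) = 0`, and completing the
square gives `|G(t)| = √q` for `t ≢ 0`. Writing `|t|` for the distance from `t` to `0` in
`ℤ/q`, Jordan's inequality gives `|E(t)| ≤ q / (2|t|)`, and `Σ_{t ≢ 0} 1/|t| ≤ 2 (1 + log q)`.
Hence the sum is at most `√q (1 + log q)`, and `log q ≤ q^ε / ε` finishes.
-/

/-- The additive character `e_q(x) = exp(2πi x/q)`, evaluated on a residue class. -/
noncomputable def eZ (q : ℕ) (x : ZMod q) : ℂ :=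
  Complex.exp (2 * (Real.pi : ℂ) * Complex.I * (x.val : ℂ) / (q : ℂ))

/-- The complete sum `Σ_{x ∈ F_q, x² = a w} e_q(h x)` over modular square roots. -/
noncomputable def sqrtSum (q : ℕ) [NeZero q] (a h : ℤ) (w : ℕ) : ℂ :=
  ∑ x : ZMod q,
    if x ^ 2 = (a : ZMod q) * (w : ZMod q) then eZ q ((h : ZMod q) * x) else 0

open Finset Real

lemma eZ_eq_stdAddChar {q : ℕ} [NeZero q] (x : ZMod q) : eZ q x = ZMod.stdAddChar x := by
  rw [eZ, ZMod.stdAddChar_apply, ZMod.toCircle_apply]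

section Characters

variable {R : Type*} [CommRing R] [Fintype R] [DecidableEq R] {ψ : AddChar R ℂ}

lemma card_mul_sum_ite_eq_sum_mul (hψ : ψ.IsPrimitive) (g : R → R) (f : R → ℂ) {ι : Type*}
    (s : Finset ι) (v : ι → R) :
    (Fintype.card R : ℂ) * ∑ i ∈ s, ∑ x, (if g x = v i then f x else 0)
      = ∑ t, (∑ x, f x * ψ (-(t * g x))) * ∑ i ∈ s, ψ (t * v i) := by
  have detect : ∀ x i, ∑ t, ψ (t * (v i - g x)) =
      if g x = v i then (Fintype.card R : ℂ) else 0 := by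
    intro x i
    simp [AddChar.sum_mulShift _ hψ, sub_eq_zero, eq_comm]
  calc _ = ∑ i ∈ s, ∑ x, f x * ∑ t, ψ (t * (v i - g x)) := by
          simp_rw [detect, mul_sum, mul_ite, mul_zero, mul_comm]
    _ = _ := by
          simp_rw [mul_sub, sub_eq_neg_add, AddChar.map_add_eq_mul, sum_mul, mul_sum]
          rw [sum_comm]
          conv_lhs => arg 2; ext x; rw [sum_comm]
          rw [sum_comm]
          simp_rw [mul_assoc]

end Characters

section FiniteField

variable {F : Type*} [Field F] [Fintype F] {ψ : AddChar F ℂ}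

lemma norm_gaussSum_eq_sqrt_card {χ : MulChar F ℂ} (hχ : χ ≠ 1) (hψ : ψ.IsPrimitive) :
    ‖gaussSum χ ψ‖ = √(Fintype.card F) := by
  have hsq : ‖gaussSum χ ψ‖ ^ 2 = Fintype.card F := by
    have : (‖gaussSum χ ψ‖ : ℂ) ^ 2 = Fintype.card F := by
      rw [← Complex.mul_conj', ← Complex.star_def, star_gaussSum_eq,
        gaussSum_mul_gaussSum_eq_card hχ hψ]
    exact_mod_cast this
  rw [← hsq, sqrt_sq (norm_nonneg _)]

lemma sum_addChar_quadratic_eq (hF : ringChar F ≠ 2) {b : F} (hb : b ≠ 0) (c : F) :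
    ∑ x, ψ (b * x ^ 2 + c * x) = ψ (-(c ^ 2 / (4 * b))) * ∑ x, ψ (b * x ^ 2) := by
  have h2 : (2 : F) ≠ 0 := Ring.two_ne_zero hF
  have h4 : (4 : F) ≠ 0 := by
    rw [show (4 : F) = 2 * 2 by norm_num]; exact mul_ne_zero h2 h2
  have square : ∀ x, b * x ^ 2 + c * x = b * (x + c / (2 * b)) ^ 2 + -(c ^ 2 / (4 * b)) := by
    intro x; field_simp; ring
  simp_rw [square, AddChar.map_add_eq_mul, mul_sum, mul_comm (ψ (-_))]
  exact Fintype.sum_equiv (Equiv.addRight _) _ _ fun _ => rfl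

variable [DecidableEq F]

lemma sum_comp_sq_eq_sum_quadraticChar (hF : ringChar F ≠ 2) (f : F → ℂ) :
    ∑ y, f (y ^ 2) = ∑ u, ((quadraticChar F u : ℂ) + 1) * f u := by
  rw [← sum_fiberwise_of_maps_to' (g := fun y : F => y ^ 2) (fun _ _ => mem_univ _) f]
  refine sum_congr rfl fun u _ => ?_
  rw [sum_const, nsmul_eq_mul]
  congr 1
  have hcard := quadraticChar_card_sqrts hF u
  rw [Set.toFinset_ofPred] at hcard
  exact_mod_cast hcard

lemma sum_addChar_mul_sq_eq_gaussSum (hF : ringChar F ≠ 2) (hψ : ψ.IsPrimitive) {b : F}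
    (hb : b ≠ 0) :
    ∑ y, ψ (b * y ^ 2) =
      gaussSum ((quadraticChar F).ringHomComp (Int.castRingHom ℂ)) (ψ.mulShift b) := by
  have hzero : ∑ u, ψ (b * u) = 0 := by
    simpa [mul_comm, hb] using AddChar.sum_mulShift b hψ
  rw [sum_comp_sq_eq_sum_quadraticChar hF (fun u => ψ (b * u))]
  simp_rw [add_one_mul, sum_add_distrib, hzero, add_zero]
  rfl

lemma norm_sum_addChar_quadratic (hF : ringChar F ≠ 2) (hψ : ψ.IsPrimitive) {b : F}
    (hb : b ≠ 0) (c : F) :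
    ‖∑ x, ψ (b * x ^ 2 + c * x)‖ = √(Fintype.card F) := by
  have hχ : (quadraticChar F).ringHomComp (Int.castRingHom ℂ) ≠ 1 :=
    (MulChar.ringHomComp_ne_one_iff (RingHom.injective_int _)).mpr (quadraticChar_ne_one hF)
  rw [sum_addChar_quadratic_eq hF hb, norm_mul, AddChar.norm_apply, one_mul,
    sum_addChar_mul_sq_eq_gaussSum hF hψ hb,
    norm_gaussSum_eq_sqrt_card hχ (AddChar.IsPrimitive.of_ne_one (hψ hb))]

end FiniteField

lemma norm_sum_Ico_pow_le {𝕜 : Type*} [NormedField 𝕜] {z : 𝕜} (hz : ‖z‖ ≤ 1) (hz1 : z ≠ 1)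
    {m n : ℕ} (hmn : m ≤ n) :
    ‖∑ i ∈ Ico m n, z ^ i‖ ≤ 2 / ‖z - 1‖ := by
  rw [geom_sum_Ico hz1 hmn, norm_div]
  gcongr
  calc ‖z ^ n - z ^ m‖ ≤ ‖z‖ ^ n + ‖z‖ ^ m := by
        simpa only [norm_pow] using norm_sub_le (z ^ n) (z ^ m)
    _ ≤ 1 + 1 := by gcongr <;> exact pow_le_one₀ (norm_nonneg z) hz
    _ = 2 := one_add_one_eq_two

namespace ZMod

variable {N : ℕ} [NeZero N]

lemma four_mul_abs_valMinAbs_div_le_norm_stdAddChar_sub_one (t : ZMod N) :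
    4 * |(t.valMinAbs : ℝ)| / N ≤ ‖stdAddChar t - 1‖ := by
  set k := t.valMinAbs
  have hN : (0 : ℝ) < N := by exact_mod_cast Nat.pos_of_neZero N
  have hk : 2 * |(k : ℝ)| ≤ N := by
    have hIoc := Set.mem_Ioc.mp t.valMinAbs_mem_Ioc
    have hkZ : 2 * |k| ≤ (N : ℤ) := by
      rcases abs_cases k with ⟨h, _⟩ | ⟨h, _⟩ <;> rw [h] <;> omega
    exact_mod_cast hkZ
  have hangle : |π * k / N| ≤ π / 2 := by
    rw [abs_div, abs_mul, abs_of_pos pi_pos, abs_of_pos hN, div_le_div_iff₀ hN two_pos]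
    nlinarith [pi_pos]
  calc 4 * |(k : ℝ)| / N = 2 * (2 / π * |π * k / N|) := by
        rw [abs_div, abs_mul, abs_of_pos pi_pos, abs_of_pos hN]
        field_simp
        ring
    _ ≤ 2 * |sin (π * k / N)| := by gcongr; exact Real.mul_abs_le_abs_sin hangle
    _ = ‖stdAddChar t - 1‖ := by
        have harg : 2 * π * Complex.I * (k : ℂ) / N = Complex.I * ((2 * π * k / N : ℝ) : ℂ) := by
          push_cast; ring
        rw [← coe_valMinAbs t, stdAddChar_coe, harg, Complex.norm_exp_I_mul_ofReal_sub_one,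
          norm_mul, Real.norm_eq_abs, Real.norm_eq_abs, abs_two]
        congr 3
        ring

lemma norm_sum_stdAddChar_mul_le {t : ZMod N} (ht : t ≠ 0) (W : ℕ) :
    ‖∑ w ∈ Icc 1 W, stdAddChar (t * (w : ZMod N))‖ ≤ N / 2 * |(t.valMinAbs : ℝ)|⁻¹ := by
  have hk : 0 < |(t.valMinAbs : ℝ)| := by simpa [valMinAbs_eq_zero] using ht
  have hN : (0 : ℝ) < N := by exact_mod_cast Nat.pos_of_neZero N
  have hz1 : stdAddChar t ≠ 1 := by
    rwa [← (stdAddChar (N := N)).map_zero_eq_one, injective_stdAddChar.ne_iff]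
  have hpow : ∀ w : ℕ, stdAddChar (t * (w : ZMod N)) = stdAddChar t ^ w := fun w => by
    rw [mul_comm, ← nsmul_eq_mul, AddChar.map_nsmul_eq_pow]
  simp_rw [hpow, ← Ico_add_one_right_eq_Icc]
  calc _ ≤ 2 / ‖stdAddChar t - 1‖ :=
        norm_sum_Ico_pow_le (AddChar.norm_apply _ _).le hz1 (by omega)
    _ ≤ 2 / (4 * |(t.valMinAbs : ℝ)| / N) := by
        gcongr
        exact four_mul_abs_valMinAbs_div_le_norm_stdAddChar_sub_one t
    _ = N / 2 * |(t.valMinAbs : ℝ)|⁻¹ := by field_simp; ring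

lemma sum_inv_abs_valMinAbs_le :
    ∑ t : ZMod N, |(t.valMinAbs : ℝ)|⁻¹ ≤ 2 * (1 + log N) := by
  have hterm : ∀ t : ZMod N, |(t.valMinAbs : ℝ)|⁻¹ ≤ (t.val : ℝ)⁻¹ + ((-t).val : ℝ)⁻¹ := by
    intro t
    rcases eq_or_ne t 0 with rfl | ht
    · simp
    have : NeZero t := ⟨ht⟩
    rw [← Int.cast_abs, Int.abs_eq_natAbs, valMinAbs_natAbs_eq_min, val_neg_of_ne_zero]
    rcases min_choice t.val (N - t.val) with h | h <;> rw [h] <;> push_cast <;>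
      simp only [le_add_iff_nonneg_right, le_add_iff_nonneg_left] <;> positivity
  have hneg : ∑ t : ZMod N, ((-t).val : ℝ)⁻¹ = ∑ t : ZMod N, (t.val : ℝ)⁻¹ :=
    Fintype.sum_equiv (Equiv.neg _) _ _ fun _ => rfl
  have hharm : ∑ t : ZMod N, (t.val : ℝ)⁻¹ ≤ 1 + log N := by
    obtain ⟨n, rfl⟩ : ∃ n, N = n + 1 := Nat.exists_eq_succ_of_ne_zero (NeZero.ne N)
    have : ∑ t : ZMod (n + 1), (t.val : ℝ)⁻¹ = harmonic n := by
      rw [show ∑ t : ZMod (n + 1), (t.val : ℝ)⁻¹ = ∑ i : Fin (n + 1), ((i : ℕ) : ℝ)⁻¹ from rfl,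
        Fin.sum_univ_eq_sum_range (fun i => ((i : ℕ) : ℝ)⁻¹), sum_range_succ']
      simp [harmonic]
    rw [this]
    refine (harmonic_le_one_add_log n).trans ?_
    rcases n.eq_zero_or_pos with rfl | hn
    · simp
    · gcongr
      omega
  calc _ ≤ ∑ t : ZMod N, ((t.val : ℝ)⁻¹ + ((-t).val : ℝ)⁻¹) := sum_le_sum fun t _ => hterm t
    _ = 2 * ∑ t : ZMod N, (t.val : ℝ)⁻¹ := by rw [sum_add_distrib, hneg]; ring
    _ ≤ 2 * (1 + log N) := by gcongr

end ZMod

lemma intCast_zmod_ne_zero_of_isCoprime {p : ℕ} (hp : p.Prime) {m : ℤ} (hm : IsCoprime m p) :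
    (m : ZMod p) ≠ 0 := by
  rw [Ne, ZMod.intCast_zmod_eq_zero_iff_dvd]
  intro hdvd
  exact hp.ne_one (by simpa using Int.natAbs_of_isUnit (hm.symm.isUnit_of_dvd hdvd))

lemma one_add_log_le_mul_rpow {x ε : ℝ} (hx : 1 ≤ x) (hε : 0 < ε) :
    1 + log x ≤ (1 + 1 / ε) * x ^ ε := by
  have h1 : 1 ≤ x ^ ε := Real.one_le_rpow hx hε.le
  have hlog : log x ≤ x ^ ε / ε := log_le_rpow_div (by linarith) hε
  calc 1 + log x ≤ x ^ ε + x ^ ε / ε := by linarith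
    _ = (1 + 1 / ε) * x ^ ε := by ring

open ZMod in
theorem norm_sum_Icc_sum_sqrt_stdAddChar_le {q : ℕ} [Fact q.Prime] (hq : q ≠ 2) (W : ℕ)
    {α η : ZMod q} (hα : α ≠ 0) (hη : η ≠ 0) :
    ‖∑ w ∈ Icc 1 W, ∑ x, if x ^ 2 = α * w then stdAddChar (η * x) else 0‖
      ≤ √q * (1 + log q) := by
  have hψ := isPrimitive_stdAddChar q
  have hF : ringChar (ZMod q) ≠ 2 := by rwa [ringChar_zmod_n]
  have hq0 : (0 : ℝ) < q := by exact_mod_cast (Fact.out : q.Prime).pos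
  have hfourier := card_mul_sum_ite_eq_sum_mul hψ (fun x => α⁻¹ * x ^ 2)
    (fun x => stdAddChar (η * x)) (Icc 1 W) (fun w => (w : ZMod q))
  simp_rw [inv_mul_eq_iff_eq_mul₀ hα, ZMod.card] at hfourier
  have hterm : ∀ t : ZMod q,
      ‖(∑ x, stdAddChar (η * x) * stdAddChar (-(t * (α⁻¹ * x ^ 2)))) *
          ∑ w ∈ Icc 1 W, stdAddChar (t * (w : ZMod q))‖
        ≤ √q * (q / 2 * |(t.valMinAbs : ℝ)|⁻¹) := by
    intro t
    rcases eq_or_ne t 0 with rfl | ht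
    · have : ∑ x, stdAddChar (η * x) = 0 := by
        simpa only [mul_comm η, if_neg hη, Nat.cast_zero] using AddChar.sum_mulShift η hψ
      simp [this]
    have hquad : ∑ x, stdAddChar (η * x) * stdAddChar (-(t * (α⁻¹ * x ^ 2))) =
        ∑ x, stdAddChar (-(t * α⁻¹) * x ^ 2 + η * x) := by
      simp_rw [← AddChar.map_add_eq_mul]; congr! 2; ring
    have hb : -(t * α⁻¹) ≠ 0 := neg_ne_zero.mpr (mul_ne_zero ht (inv_ne_zero hα))
    rw [norm_mul, hquad, norm_sum_addChar_quadratic hF hψ hb, ZMod.card]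
    gcongr
    exact norm_sum_stdAddChar_mul_le ht W
  have hbound : q * ‖∑ w ∈ Icc 1 W, ∑ x, if x ^ 2 = α * w then stdAddChar (η * x) else 0‖
      ≤ q * (√q * (1 + log q)) := by
    calc _ = ‖∑ t, _‖ := by rw [← hfourier, norm_mul, Complex.norm_natCast]
      _ ≤ ∑ t : ZMod q, √q * (q / 2 * |(t.valMinAbs : ℝ)|⁻¹) :=
          (norm_sum_le _ _).trans (sum_le_sum fun t _ => hterm t)
      _ = √q * (q / 2) * ∑ t : ZMod q, |(t.valMinAbs : ℝ)|⁻¹ := by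
          rw [mul_sum]; simp_rw [mul_assoc]
      _ ≤ √q * (q / 2) * (2 * (1 + log q)) := by
          gcongr; exact sum_inv_abs_valMinAbs_le
      _ = q * (√q * (1 + log q)) := by ring
  exact le_of_mul_le_mul_left hbound hq0

theorem stmt8 :
    ∀ ε : ℝ, 0 < ε → ∃ C : ℝ, 0 < C ∧
      ∀ q : ℕ, ∀ _ : Fact q.Prime, Odd q →
      ∀ W : ℕ, 1 ≤ W → W ≤ q →
      ∀ a h : ℤ, IsCoprime (a * h) (q : ℤ) →
        ‖∑ w ∈ Finset.Icc 1 W, sqrtSum q a h w‖ ≤ C * (q : ℝ) ^ ((1 : ℝ)/2 + ε) := by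
  intro ε hε
  refine ⟨1 + 1 / ε, by positivity, fun q hq hodd W _ _ a h hco => ?_⟩
  have hq2 : q ≠ 2 := by rintro rfl; exact Nat.not_odd_iff_even.mpr even_two hodd
  have hah := intCast_zmod_ne_zero_of_isCoprime hq.out hco
  rw [Int.cast_mul, mul_ne_zero_iff] at hah
  have hq1 : (1 : ℝ) ≤ q := by exact_mod_cast hq.out.one_lt.le
  calc ‖∑ w ∈ Icc 1 W, sqrtSum q a h w‖ ≤ √q * (1 + log q) := by
        simpa only [sqrtSum, eZ_eq_stdAddChar] using
          norm_sum_Icc_sum_sqrt_stdAddChar_le hq2 W hah.1 hah.2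
    _ ≤ (q : ℝ) ^ ((1 : ℝ) / 2) * ((1 + 1 / ε) * (q : ℝ) ^ ε) := by
        rw [Real.sqrt_eq_rpow]
        gcongr
        exact one_add_log_le_mul_rpow hq1 hε
    _ = (1 + 1 / ε) * (q : ℝ) ^ ((1 : ℝ) / 2 + ε) := by
        rw [mul_left_comm, ← Real.rpow_add (by linarith)]
end

section
/- There exists an absolute constant C > 0 such that the following holds. Let q be a prime, let I and J be intervals of integers containing h and H integers respectively, let s be an integer, and let I(s) denote the number of pairs (x,y) ∈ I × J with x ≡ ys (mod q). Then either I(s) ≤ C · max{ Hh/q, 1 }, or there exist integers a, b, not both zero, with |a| ≤ C h / I(s) and |b| ≤ C H / I(s), satisfying a ≡ b s (mod q). -/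
/-! Among the differences of two solutions `(x, y)` pick `d` minimising the weight
`w = max (|d₁| H, |d₂| h)`. Solutions on a common line parallel to `d` are then at least `d`
apart, so each such line carries at most `h H / w + 1` of them. The lines are labelled by the
cross product with `d`, which is divisible by `q` at every solution and ranges over an interval
of length `4 w`, so at most `4 w / q + 1` lines occur. Hence `N w ≤ (4 w / q + 1) (h H + w)`,
and `N > 10 h H / q` forces `N w ≤ 10 h H`, that is `N |d₁| ≤ 10 h` and `N |d₂| ≤ 10 H`. -/

/-- The number of solutions to `x ≡ y s (mod q)` with `x ∈ I`, `y ∈ J`. -/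
def congCount (q : ℕ) (I J : Finset ℤ) (s : ℤ) : ℕ :=
  ((I ×ˢ J).filter (fun t => (t.1 : ZMod q) = (t.2 : ZMod q) * (s : ZMod q))).card

open Finset

theorem card_mul_le_of_forall_le_abs_sub {F : Finset ℤ} {a b g : ℤ} (hab : a ≤ b + g)
    (hF : ∀ t ∈ F, a ≤ t ∧ t ≤ b) (hgap : ∀ t ∈ F, ∀ t' ∈ F, t ≠ t' → g ≤ |t - t'|) :
    #F * g ≤ b - a + g := by
  induction F using Finset.induction_on_max generalizing b with
  | empty => simp only [card_empty, Nat.cast_zero, zero_mul]; linarith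
  | insert x F hlt ih =>
    have hF' : ∀ t ∈ F, a ≤ t ∧ t ≤ x - g := fun t ht => by
      have := hgap x (mem_insert_self x F) t (mem_insert_of_mem ht) (hlt t ht).ne'
      rw [abs_of_pos (sub_pos.2 (hlt t ht))] at this
      exact ⟨(hF t (mem_insert_of_mem ht)).1, by linarith⟩
    have hx := hF x (mem_insert_self x F)
    have := ih (by linarith) hF' fun t ht t' ht' =>
      hgap t (mem_insert_of_mem ht) t' (mem_insert_of_mem ht')
    rw [card_insert_of_notMem fun hx => (hlt x hx).false]
    push_cast
    linarith

/-- Weighted sup norm for which the box `[-h, h] × [-H, H]` is the ball of radius `h * H`. -/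
def boxWeight (h H : ℤ) (e : ℤ × ℤ) : ℤ := max (|e.1| * H) (|e.2| * h)

def cross (d e : ℤ × ℤ) : ℤ := d.2 * e.1 - d.1 * e.2

section

variable {q : ℕ} {s h H u v : ℤ} {d e : ℤ × ℤ} {S : Finset (ℤ × ℤ)}

theorem boxWeight_nonneg (hH : 0 ≤ H) (e : ℤ × ℤ) : 0 ≤ boxWeight h H e :=
  le_max_of_le_left (mul_nonneg (abs_nonneg _) hH)

theorem boxWeight_swap (h H : ℤ) (e : ℤ × ℤ) : boxWeight H h e.swap = boxWeight h H e :=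
  max_comm _ _

theorem cross_swap (d e : ℤ × ℤ) : cross d.swap e.swap = -cross d e := by
  simp only [cross, Prod.fst_swap, Prod.snd_swap]
  ring

theorem cross_sub (d e e' : ℤ × ℤ) : cross d (e - e') = cross d e - cross d e' := by
  simp only [cross, Prod.fst_sub, Prod.snd_sub]
  ring

theorem abs_cross_le (h1 : |e.1| ≤ h) (h2 : |e.2| ≤ H) : |cross d e| ≤ 2 * boxWeight h H d :=
  calc |cross d e| ≤ |d.2| * |e.1| + |d.1| * |e.2| := by
        rw [cross, ← abs_mul, ← abs_mul]; exact abs_sub _ _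
    _ ≤ |d.2| * h + |d.1| * H := by gcongr
    _ ≤ 2 * boxWeight h H d := by
        rw [two_mul, add_comm]; exact add_le_add (le_max_left _ _) (le_max_right _ _)

theorem cross_intCast_eq_zero (hd : (d.1 : ZMod q) = (d.2 : ZMod q) * s)
    (he : (e.1 : ZMod q) = (e.2 : ZMod q) * s) : ((cross d e : ℤ) : ZMod q) = 0 := by
  push_cast [cross]
  rw [hd, he]
  ring

theorem abs_fst_le_of_cross_eq_zero (hh : 0 < h) (hH : 0 < H) (hd : |d.2| * h ≤ |d.1| * H)
    (hde : cross d e = 0) (hle : boxWeight h H d ≤ boxWeight h H e) : |d.1| ≤ |e.1| := by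
  have hpar : |d.2| * |e.1| = |d.1| * |e.2| := by
    rw [← abs_mul, ← abs_mul, ← sub_eq_zero.1 hde]
  rw [boxWeight, max_eq_left hd] at hle
  rcases le_max_iff.1 hle with hle | hle
  · exact le_of_mul_le_mul_right hle hH
  · have key : |d.2| * h * |d.1| ≤ |d.2| * h * |e.1| :=
      calc |d.2| * h * |d.1| ≤ |d.1| * H * |d.1| := by gcongr
        _ ≤ |e.2| * h * |d.1| := by gcongr
        _ = |d.2| * h * |e.1| := by linear_combination h * hpar.symm
    rcases (abs_nonneg d.2).eq_or_lt with hd2 | hd2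
    · rcases mul_eq_zero.1 (by rw [← hpar, ← hd2, zero_mul] : |d.1| * |e.2| = 0) with hd1 | he2
      · exact hd1 ▸ abs_nonneg _
      · rw [he2, zero_mul] at hle
        nlinarith [abs_nonneg d.1, abs_nonneg e.1]
    · exact le_of_mul_le_mul_left key (mul_pos hd2 hh)

theorem card_mul_boxWeight_le_of_abs_snd_mul_le (hh : 0 < h) (hH : 0 < H)
    (hd : |d.2| * h ≤ |d.1| * H) (hS : ∀ p ∈ S, p.1 ∈ Ioc u (u + h))
    (hpar : ∀ p ∈ S, ∀ p' ∈ S, cross d (p - p') = 0)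
    (hmin : ∀ p ∈ S, ∀ p' ∈ S, p ≠ p' → boxWeight h H d ≤ boxWeight h H (p - p')) :
    #S * boxWeight h H d ≤ h * H + boxWeight h H d := by
  rw [boxWeight, max_eq_left hd]
  rcases eq_or_ne d.1 0 with hd1 | hd1
  · simp only [hd1, abs_zero, zero_mul, mul_zero, add_zero]
    positivity
  have hinj : Set.InjOn Prod.fst (S : Set (ℤ × ℤ)) := fun p hp p' hp' hfst => by
    have := hpar p hp p' hp'
    simp only [cross, Prod.fst_sub, Prod.snd_sub, hfst, sub_self, mul_zero, zero_sub,
      neg_eq_zero, mul_eq_zero, hd1, false_or, sub_eq_zero] at this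
    exact Prod.ext hfst this
  have hgap := card_mul_le_of_forall_le_abs_sub (F := S.image Prod.fst) (a := u + 1)
    (b := u + h) (g := |d.1|) (by linarith [abs_nonneg d.1])
    (forall_mem_image.2 fun p hp => by have := mem_Ioc.1 (hS p hp); omega)
    (forall_mem_image.2 fun p hp => forall_mem_image.2 fun p' hp' hne =>
      abs_fst_le_of_cross_eq_zero hh hH hd (hpar p hp p' hp')
        (hmin p hp p' hp' fun heq => hne (heq ▸ rfl)))
  rw [card_image_of_injOn hinj] at hgap
  nlinarith

theorem card_mul_boxWeight_le_of_cross_eq_zero (hh : 0 < h) (hH : 0 < H)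
    (hS : S ⊆ Ioc u (u + h) ×ˢ Ioc v (v + H)) (hpar : ∀ p ∈ S, ∀ p' ∈ S, cross d (p - p') = 0)
    (hmin : ∀ p ∈ S, ∀ p' ∈ S, p ≠ p' → boxWeight h H d ≤ boxWeight h H (p - p')) :
    #S * boxWeight h H d ≤ h * H + boxWeight h H d := by
  rcases le_total (|d.2| * h) (|d.1| * H) with hd | hd
  · exact card_mul_boxWeight_le_of_abs_snd_mul_le hh hH hd
      (fun p hp => (mem_product.1 (hS hp)).1) hpar hmin
  · have := card_mul_boxWeight_le_of_abs_snd_mul_le (S := S.image Prod.swap) (d := d.swap)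
      (u := v) hH hh hd (forall_mem_image.2 fun p hp => (mem_product.1 (hS hp)).2)
      (forall_mem_image.2 fun p hp => forall_mem_image.2 fun p' hp' => by
        rw [← Prod.swap_sub, cross_swap, hpar p hp p' hp', neg_zero])
      (forall_mem_image.2 fun p hp => forall_mem_image.2 fun p' hp' hne => by
        rw [← Prod.swap_sub, boxWeight_swap, boxWeight_swap]
        exact hmin p hp p' hp' fun heq => hne (heq ▸ rfl))
    rwa [card_image_of_injective _ Prod.swap_injective, boxWeight_swap, mul_comm H] at this

theorem card_mul_boxWeight_le_card_image_mul (hh : 0 < h) (hH : 0 < H)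
    (hS : S ⊆ Ioc u (u + h) ×ˢ Ioc v (v + H))
    (hmin : ∀ p ∈ S, ∀ p' ∈ S, p ≠ p' → boxWeight h H d ≤ boxWeight h H (p - p')) :
    #S * boxWeight h H d ≤ #(S.image (cross d)) * (h * H + boxWeight h H d) := by
  rw [card_eq_sum_card_image (cross d) S, Nat.cast_sum, sum_mul, ← nsmul_eq_mul,
    ← sum_const]
  refine sum_le_sum fun c _ => card_mul_boxWeight_le_of_cross_eq_zero hh hH
    ((filter_subset _ _).trans hS) (fun p hp p' hp' => ?_)
    fun p hp p' hp' => hmin p (mem_filter.1 hp).1 p' (mem_filter.1 hp').1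
  rw [cross_sub, (mem_filter.1 hp).2, (mem_filter.1 hp').2, sub_self]

theorem card_image_cross_mul_le (hH : 0 ≤ H) (hS : S ⊆ Ioc u (u + h) ×ˢ Ioc v (v + H))
    (hSq : ∀ p ∈ S, (p.1 : ZMod q) = (p.2 : ZMod q) * s)
    (hdq : (d.1 : ZMod q) = (d.2 : ZMod q) * s) :
    #(S.image (cross d)) * q ≤ 4 * boxWeight h H d + q := by
  have hw := boxWeight_nonneg (h := h) hH d
  have hbound := card_mul_le_of_forall_le_abs_sub (F := S.image (cross d))
    (a := cross d (u, v) - 2 * boxWeight h H d) (b := cross d (u, v) + 2 * boxWeight h H d)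
    (g := q) (by omega) (forall_mem_image.2 fun p hp => by
      have hp := mem_product.1 (hS hp)
      have := abs_cross_le (h := h) (H := H) (d := d) (e := p - (u, v))
        (by rw [Prod.fst_sub, abs_le]; have := mem_Ioc.1 hp.1; constructor <;> linarith)
        (by rw [Prod.snd_sub, abs_le]; have := mem_Ioc.1 hp.2; constructor <;> linarith)
      rw [cross_sub, abs_le] at this
      constructor <;> linarith)
    (forall_mem_image.2 fun p hp => forall_mem_image.2 fun p' hp' hne => by
      refine Int.le_of_dvd (abs_pos.2 (sub_ne_zero.2 hne)) ((dvd_abs _ _).2 ?_)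
      rw [← ZMod.intCast_zmod_eq_zero_iff_dvd, Int.cast_sub,
        cross_intCast_eq_zero hdq (hSq p hp), cross_intCast_eq_zero hdq (hSq p' hp'), sub_self])
  linarith

theorem card_mul_boxWeight_le (hq : 0 < q) (hh : 0 < h) (hH : 0 < H)
    (hS : S ⊆ Ioc u (u + h) ×ˢ Ioc v (v + H))
    (hSq : ∀ p ∈ S, (p.1 : ZMod q) = (p.2 : ZMod q) * s)
    (hdq : (d.1 : ZMod q) = (d.2 : ZMod q) * s)
    (hmin : ∀ p ∈ S, ∀ p' ∈ S, p ≠ p' → boxWeight h H d ≤ boxWeight h H (p - p'))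
    (hw : boxWeight h H d ≤ h * H) (hN : 10 * (h * H) ≤ #S * q) :
    #S * boxWeight h H d ≤ 10 * (h * H) := by
  set w := boxWeight h H d
  have hw0 : 0 ≤ w := boxWeight_nonneg hH.le d
  have hq' : (0 : ℤ) < q := by exact_mod_cast hq
  have hcount := mul_le_mul_of_nonneg_right (card_mul_boxWeight_le_card_image_mul hh hH hS hmin)
    hq'.le
  have himage := mul_le_mul_of_nonneg_right (card_image_cross_mul_le hH.le hS hSq hdq)
    (show 0 ≤ h * H + w by positivity)
  have hw' := mul_le_mul_of_nonneg_left (show h * H + w ≤ 2 * (h * H) by linarith)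
    (show 0 ≤ 4 * w + q by positivity)
  have hN' := mul_le_mul_of_nonneg_left hN hw0
  exact le_of_mul_le_mul_right (by nlinarith) hq'

theorem exists_small_solution_of_le_card_mul (hq : 0 < q)
    (hS : S ⊆ Ioc u (u + h) ×ˢ Ioc v (v + H))
    (hSq : ∀ p ∈ S, (p.1 : ZMod q) = (p.2 : ZMod q) * s) (hS1 : 1 < #S)
    (hN : 10 * (h * H) ≤ #S * q) :
    ∃ d : ℤ × ℤ, d ≠ 0 ∧ #S * |d.1| ≤ 10 * h ∧ #S * |d.2| ≤ 10 * H ∧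
      (d.1 : ZMod q) = (d.2 : ZMod q) * s := by
  obtain ⟨p₀, hp₀, p₀', hp₀', hne₀⟩ := one_lt_card.1 hS1
  obtain ⟨⟨p, p'⟩, hpp', hmin⟩ := S.offDiag.exists_min_image
    (fun r => boxWeight h H (r.1 - r.2)) ⟨(p₀, p₀'), mem_offDiag.2 ⟨hp₀, hp₀', hne₀⟩⟩
  obtain ⟨hp, hp', hne⟩ := mem_offDiag.1 hpp'
  have hbox := mem_product.1 (hS hp)
  have hbox' := mem_product.1 (hS hp')
  simp only [mem_Ioc] at hbox hbox'
  have hh : 0 < h := by linarith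
  have hH : 0 < H := by linarith
  set d := p - p'
  have hd1 : |d.1| ≤ h := by rw [abs_le, Prod.fst_sub]; constructor <;> linarith
  have hd2 : |d.2| ≤ H := by rw [abs_le, Prod.snd_sub]; constructor <;> linarith
  have hdq : (d.1 : ZMod q) = (d.2 : ZMod q) * s := by
    push_cast [d, Prod.fst_sub, Prod.snd_sub]
    rw [hSq p hp, hSq p' hp']
    ring
  have hNw := card_mul_boxWeight_le hq hh hH hS hSq hdq
    (fun a ha b hb hab => hmin (a, b) (mem_offDiag.2 ⟨ha, hb, hab⟩))
    (max_le (by gcongr) (by rw [mul_comm h]; gcongr)) hN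
  refine ⟨d, sub_ne_zero.2 hne, ?_, ?_, hdq⟩
  · refine le_of_mul_le_mul_right ?_ hH
    calc #S * |d.1| * H ≤ #S * boxWeight h H d := by
          rw [mul_assoc]; gcongr; exact le_max_left _ _
      _ ≤ 10 * h * H := by linarith
  · refine le_of_mul_le_mul_right ?_ hh
    calc #S * |d.2| * h ≤ #S * boxWeight h H d := by
          rw [mul_assoc]; gcongr; exact le_max_right _ _
      _ ≤ 10 * H * h := by linarith

end

theorem stmt9 :
    ∃ C : ℝ, 0 < C ∧
      ∀ q : ℕ, q.Prime →
      ∀ h H : ℕ, ∀ u v : ℤ,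
      ∀ s : ℤ,
        (congCount q (Finset.Ioc u (u + h)) (Finset.Ioc v (v + H)) s : ℝ) ≤
            C * max ((H * h : ℝ) / q) 1 ∨
        ∃ a b : ℤ, ¬ (a = 0 ∧ b = 0) ∧
          (|a| : ℝ) ≤ C * h / (congCount q (Finset.Ioc u (u + h)) (Finset.Ioc v (v + H)) s : ℝ) ∧
          (|b| : ℝ) ≤ C * H / (congCount q (Finset.Ioc u (u + h)) (Finset.Ioc v (v + H)) s : ℝ) ∧
          (a : ZMod q) = (b : ZMod q) * (s : ZMod q) := by
  refine ⟨10, by norm_num, fun q hq h H u v s => ?_⟩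
  rw [congCount]
  set S := (Ioc u (u + h) ×ˢ Ioc v (v + H)).filter
    fun t => (t.1 : ZMod q) = (t.2 : ZMod q) * (s : ZMod q)
  have hSbox : S ⊆ Ioc u (u + h) ×ˢ Ioc v (v + H) := filter_subset _ _
  have hSq : ∀ p ∈ S, (p.1 : ZMod q) = (p.2 : ZMod q) * s := fun p hp => (mem_filter.1 hp).2
  clear_value S
  refine or_iff_not_imp_left.2 fun hlarge => ?_
  rw [not_le, mul_max_of_nonneg _ _ (by norm_num : (0 : ℝ) ≤ 10), max_lt_iff, mul_one,
    ← mul_div_assoc, div_lt_iff₀ (by exact_mod_cast hq.pos)] at hlarge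
  have hS : (1 : ℝ) < #S := by linarith [hlarge.2]
  have hN : 10 * ((h : ℤ) * H) ≤ #S * q := by
    rw [mul_comm (h : ℤ)]
    exact_mod_cast hlarge.1.le
  obtain ⟨d, hd0, hd1, hd2, hdq⟩ :=
    exists_small_solution_of_le_card_mul hq.pos hSbox hSq (by exact_mod_cast hS) hN
  refine ⟨d.1, d.2, fun h0 => hd0 (Prod.ext h0.1 h0.2), ?_, ?_, hdq⟩
  · rw [le_div_iff₀ (by linarith), mul_comm]
    exact_mod_cast hd1
  · rw [le_div_iff₀ (by linarith), mul_comm]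
    exact_mod_cast hd2
end

section
/- For every ε > 0 there exists a constant C(ε) > 0 such that for every odd prime q and every positive integer N ≤ q^{1/2}, the additive energy of modular square roots satisfies E_q(N) ≤ C(ε) ( N⁶ q^{−1+ε} + N² q^{ε} ), where E_q(N) := #{ (u,v,x,y) ∈ F_q⁴ : u + v = x + y and the representatives of u², v², x², y² all lie in the interval [N, 2N) }. -/
/-!
Write `a, b, c, d ∈ [N, 2N)` for the representatives of `u², v², x², y²`, and `s = a + b`,
`p = ab`. The product of the eight forms `u ± v ± x ± y` is a polynomial `G(s, p, c + d, cd)`,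
so `u + v = x + y` forces `q ∣ G`, while `(s, p, c, d)` determines `(u, v, x, y)` up to
`16` choices. With `k = s - c - d` and `W = k² + 4(cd - p)` one has `G = W² - 16k²cd`.
If `k = 0` then `G = 16(cd - p)²`, so `q ∣ cd - p`; as `|cd - p| < 3N² ≤ 3q` this leaves
`O(N²)` tuples. If `k ≠ 0`, write `G = qm`: there are `O(N⁴/q + 1)` values of `m` and `O(N²)`
of `W`; for each pair both `|k|` and `c` divide `W² - qm = 16k²cd ≤ 256N⁴`, and `(m, W, k, c)`
determines the tuple. The divisor bound `d(n) ≪ n^δ` then gives `O(q^ε (N⁶/q + N²))`.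
-/

/-- `E_q(N)`: the number of quadruples `(u,v,x,y) ∈ F_q⁴` with `u + v = x + y` such that
the representatives (in `{0,…,q−1}`) of `u², v², x², y²` all lie in `[N, 2N)`. -/
noncomputable def EqN (q N : ℕ) : ℕ :=
  {t : ZMod q × ZMod q × ZMod q × ZMod q |
    t.1 + t.2.1 = t.2.2.1 + t.2.2.2 ∧
    N ≤ (t.1 ^ 2).val ∧ (t.1 ^ 2).val < 2 * N ∧
    N ≤ (t.2.1 ^ 2).val ∧ (t.2.1 ^ 2).val < 2 * N ∧
    N ≤ (t.2.2.1 ^ 2).val ∧ (t.2.2.1 ^ 2).val < 2 * N ∧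
    N ≤ (t.2.2.2 ^ 2).val ∧ (t.2.2.2 ^ 2).val < 2 * N}.ncard

open Finset

section NormForm

variable {R : Type*} [CommRing R]

def normFormW (s p s' p' : R) : R := (s - s') ^ 2 + 4 * (p' - p)

def normForm (s p s' p' : R) : R := normFormW s p s' p' ^ 2 - 16 * (s - s') ^ 2 * p'

theorem normForm_sq_eq_prod (u v x y : R) :
    normForm (u ^ 2 + v ^ 2) (u ^ 2 * v ^ 2) (x ^ 2 + y ^ 2) (x ^ 2 * y ^ 2) =
      (u + v - x - y) * (u + v - x + y) * (u + v + x - y) * (u + v + x + y) *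
        (u - v - x - y) * (u - v - x + y) * (u - v + x - y) * (u - v + x + y) := by
  unfold normForm normFormW
  ring

theorem normForm_sq_eq_zero {u v x y : R} (h : u + v = x + y) :
    normForm (u ^ 2 + v ^ 2) (u ^ 2 * v ^ 2) (x ^ 2 + y ^ 2) (x ^ 2 * y ^ 2) = 0 := by
  rw [normForm_sq_eq_prod, show u + v - x - y = 0 by rw [h]; ring]
  simp

theorem normFormW_sq_sub_normForm (s p s' p' : R) :
    normFormW s p s' p' ^ 2 - normForm s p s' p' = 16 * (s - s') ^ 2 * p' := by
  unfold normForm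
  ring

theorem normForm_self_left (s p p' : R) : normForm s p s p' = 16 * (p' - p) ^ 2 := by
  unfold normForm normFormW
  ring

@[simp, norm_cast]
theorem Int.cast_normForm (s p s' p' : ℤ) :
    ((normForm s p s' p' : ℤ) : R) = normForm (s : R) p s' p' := by
  simp [normForm, normFormW]

end NormForm

theorem Nat.eq_of_add_eq_of_mul_eq {a b a' b' : ℕ} (hs : a + b = a' + b') (hp : a * b = a' * b')
    (hle : a ≤ b ↔ a' ≤ b') : a = a' ∧ b = b' := by
  have : ((a : ℤ) - a') * (a - b') = 0 := by
    zify at hs hp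
    linear_combination (a : ℤ) * hs - hp
  rcases _root_.mul_eq_zero.mp this with h | h <;> omega

theorem ZMod.eq_of_sq_eq_of_two_mul_val_lt_iff {q : ℕ} [Fact q.Prime] (hq : Odd q)
    {u v : ZMod q} (h : u ^ 2 = v ^ 2) (hlt : 2 * u.val < q ↔ 2 * v.val < q) : u = v := by
  rcases sq_eq_sq_iff_eq_or_eq_neg.mp h with h | rfl
  · exact h
  by_cases hv : v = 0
  · simp [hv]
  have : NeZero v := ⟨hv⟩
  have hval : 0 < v.val := (ZMod.val_pos).mpr hv
  rw [ZMod.val_neg_of_ne_zero] at hlt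
  obtain ⟨r, rfl⟩ := hq
  have := v.val_lt
  omega

theorem exists_add_one_le_mul_pow {x : ℝ} (hx : 1 < x) :
    ∃ C : ℝ, 1 ≤ C ∧ ∀ a : ℕ, (a + 1 : ℝ) ≤ C * x ^ a := by
  set C := max 1 (x - 1)⁻¹
  have hCx : 1 ≤ C * (x - 1) := by
    calc (1 : ℝ) = (x - 1)⁻¹ * (x - 1) := (inv_mul_cancel₀ (by linarith)).symm
      _ ≤ C * (x - 1) := mul_le_mul_of_nonneg_right (le_max_right _ _) (by linarith)
  refine ⟨C, le_max_left _ _, fun a => ?_⟩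
  have hBernoulli : 1 + a * (x - 1) ≤ x ^ a := by
    simpa using one_add_mul_le_pow (by linarith : (-2 : ℝ) ≤ x - 1) a
  calc (a + 1 : ℝ) ≤ C * (1 + a * (x - 1)) := by
        nlinarith [le_max_left 1 (x - 1)⁻¹, (Nat.cast_nonneg a : (0 : ℝ) ≤ a)]
    _ ≤ C * x ^ a := by gcongr

theorem add_one_le_pow_of_two_le {y : ℝ} (hy : 2 ≤ y) (a : ℕ) : (a + 1 : ℝ) ≤ y ^ a :=
  calc (a + 1 : ℝ) ≤ 2 ^ a := by exact_mod_cast Nat.lt_two_pow_self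
    _ ≤ y ^ a := by gcongr

theorem exists_card_divisors_le_mul_rpow {δ : ℝ} (hδ : 0 < δ) :
    ∃ C : ℝ, 0 < C ∧ ∀ n : ℕ, n ≠ 0 → (#n.divisors : ℝ) ≤ C * (n : ℝ) ^ δ := by
  obtain ⟨C, hC1, hC⟩ := exists_add_one_le_mul_pow (Real.one_lt_rpow one_lt_two hδ)
  set B := ⌈(2 : ℝ) ^ δ⁻¹⌉₊
  -- only the finitely many primes below `2 ^ (1 / δ)` contribute a factor `C`
  have hprime : ∀ p : ℕ, p.Prime → ∀ a : ℕ,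
      (a + 1 : ℝ) ≤ (if p < B then C else 1) * ((p : ℝ) ^ δ) ^ a := by
    intro p hp a
    have hp2 : (2 : ℝ) ≤ p := by exact_mod_cast hp.two_le
    split_ifs with hpB
    · calc (a + 1 : ℝ) ≤ C * ((2 : ℝ) ^ δ) ^ a := hC a
        _ ≤ C * ((p : ℝ) ^ δ) ^ a := by gcongr
    · rw [one_mul]
      refine add_one_le_pow_of_two_le ?_ a
      calc (2 : ℝ) = ((2 : ℝ) ^ δ⁻¹) ^ δ := by
            rw [← Real.rpow_mul zero_le_two, inv_mul_cancel₀ hδ.ne', Real.rpow_one]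
        _ ≤ (p : ℝ) ^ δ := by
            gcongr
            exact (Nat.le_ceil _).trans (by exact_mod_cast not_lt.mp hpB)
  refine ⟨C ^ B, by positivity, fun n hn => ?_⟩
  have hsmall : ∏ p ∈ n.primeFactors, (if p < B then C else 1) ≤ C ^ B := by
    rw [prod_ite, prod_const, prod_const_one, mul_one]
    refine pow_le_pow_right₀ hC1 ((card_le_card fun p hp => ?_).trans (card_range B).le)
    simpa using (mem_filter.mp hp).2
  have hnδ : (n : ℝ) ^ δ = ∏ p ∈ n.primeFactors, ((p : ℝ) ^ δ) ^ n.factorization p := by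
    conv_lhs => rw [← Nat.prod_factorization_pow_eq_self hn,
      Nat.prod_factorization_eq_prod_primeFactors]
    push_cast
    rw [← Real.finsetProd_rpow _ _ fun p _ => by positivity]
    exact prod_congr rfl fun p _ => (Real.rpow_pow_comm (Nat.cast_nonneg p) δ _).symm
  rw [Nat.card_divisors hn]
  push_cast
  calc ∏ p ∈ n.primeFactors, ((n.factorization p : ℝ) + 1)
      ≤ ∏ p ∈ n.primeFactors, ((if p < B then C else 1) * ((p : ℝ) ^ δ) ^ n.factorization p) :=
        prod_le_prod (fun _ _ => by positivity)
          fun p hp => hprime p (Nat.prime_of_mem_primeFactors hp) _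
    _ ≤ C ^ B * (n : ℝ) ^ δ := by
        rw [prod_mul_distrib, hnδ]
        gcongr

section Bounds

variable {N s p s' p' : ℤ}

theorem sq_sub_lt_four_mul_sq (hs : 2 * N ≤ s ∧ s < 4 * N) (hs' : 2 * N ≤ s' ∧ s' < 4 * N) :
    (s - s') ^ 2 < 4 * N ^ 2 := by
  nlinarith

theorem abs_normFormW_le (hs : 2 * N ≤ s ∧ s < 4 * N) (hs' : 2 * N ≤ s' ∧ s' < 4 * N)
    (hp : N ^ 2 ≤ p ∧ p < 4 * N ^ 2) (hp' : N ^ 2 ≤ p' ∧ p' < 4 * N ^ 2) :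
    |normFormW s p s' p'| ≤ 16 * N ^ 2 := by
  have := sq_sub_lt_four_mul_sq hs hs'
  rw [normFormW, abs_le]
  constructor <;> nlinarith

theorem abs_normForm_le (hs : 2 * N ≤ s ∧ s < 4 * N) (hs' : 2 * N ≤ s' ∧ s' < 4 * N)
    (hp : N ^ 2 ≤ p ∧ p < 4 * N ^ 2) (hp' : N ^ 2 ≤ p' ∧ p' < 4 * N ^ 2) :
    |normForm s p s' p'| ≤ 256 * N ^ 4 := by
  have hk := sq_sub_lt_four_mul_sq hs hs'
  have hW := abs_le.mp (abs_normFormW_le hs hs' hp hp')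
  rw [normForm, abs_le]
  constructor <;> nlinarith [sq_nonneg (s - s'), sq_nonneg (normFormW s p s' p')]

end Bounds

def tupleGap (t : ℕ × ℕ × ℕ × ℕ) : ℤ := t.1 - (t.2.2.1 + t.2.2.2)

def tupleW (t : ℕ × ℕ × ℕ × ℕ) : ℤ :=
  normFormW (t.1 : ℤ) t.2.1 (t.2.2.1 + t.2.2.2) (t.2.2.1 * t.2.2.2)

def tupleG (t : ℕ × ℕ × ℕ × ℕ) : ℤ :=
  normForm (t.1 : ℤ) t.2.1 (t.2.2.1 + t.2.2.2) (t.2.2.1 * t.2.2.2)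

/-- A tuple `(s, p, c, d)` stands for the sum `s = a + b` and product `p = ab` of the first pair
of representatives together with the second pair `(c, d)`. -/
def energyTuples (q N : ℕ) : Finset (ℕ × ℕ × ℕ × ℕ) :=
  {t ∈ Ico (2 * N) (4 * N) ×ˢ Ico (N ^ 2) (4 * N ^ 2) ×ˢ Ico N (2 * N) ×ˢ Ico N (2 * N) |
    (q : ℤ) ∣ tupleG t}

theorem tupleW_sq_sub_tupleG (t : ℕ × ℕ × ℕ × ℕ) :
    tupleW t ^ 2 - tupleG t = 16 * tupleGap t ^ 2 * (t.2.2.1 * t.2.2.2) :=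
  normFormW_sq_sub_normForm _ _ _ _

theorem mem_energyTuples {q N s p c d : ℕ} :
    (s, p, c, d) ∈ energyTuples q N ↔
      (2 * N ≤ s ∧ s < 4 * N) ∧ (N ^ 2 ≤ p ∧ p < 4 * N ^ 2) ∧ (N ≤ c ∧ c < 2 * N) ∧
        (N ≤ d ∧ d < 2 * N) ∧ (q : ℤ) ∣ tupleG (s, p, c, d) := by
  simp [energyTuples, and_assoc]

theorem energyTuples_int_bounds {q N s p c d : ℕ} (ht : (s, p, c, d) ∈ energyTuples q N) :
    (2 * (N : ℤ) ≤ s ∧ (s : ℤ) < 4 * N) ∧ (2 * (N : ℤ) ≤ c + d ∧ (c : ℤ) + d < 4 * N) ∧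
      ((N : ℤ) ^ 2 ≤ p ∧ (p : ℤ) < 4 * N ^ 2) ∧
        ((N : ℤ) ^ 2 ≤ c * d ∧ (c : ℤ) * d < 4 * N ^ 2) := by
  obtain ⟨⟨hs, hs'⟩, ⟨hp, hp'⟩, ⟨hc, hc'⟩, ⟨hd, hd'⟩, -⟩ := mem_energyTuples.mp ht
  zify at *
  refine ⟨⟨hs, hs'⟩, ⟨by omega, by omega⟩, ⟨hp, hp'⟩, by nlinarith, by nlinarith⟩

theorem EqN_le_card_energyTuples {q : ℕ} [Fact q.Prime] (hq : Odd q) (N : ℕ) :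
    EqN q N ≤ 16 * #(energyTuples q N) := by
  let sign : ZMod q → Bool := fun u => decide (2 * u.val < q)
  let F : ZMod q × ZMod q × ZMod q × ZMod q → (ℕ × ℕ × ℕ × ℕ) × (Bool × Bool × Bool × Bool) :=
    fun ⟨u, v, x, y⟩ =>
      (((u ^ 2).val + (v ^ 2).val, (u ^ 2).val * (v ^ 2).val, (x ^ 2).val, (y ^ 2).val),
        (sign u, sign v, sign x, decide ((u ^ 2).val ≤ (v ^ 2).val)))
  unfold EqN
  refine (Set.ncard_le_ncard_of_injOn F
    (t := ↑(energyTuples q N ×ˢ (univ : Finset (Bool × Bool × Bool × Bool)))) ?_ ?_).trans ?_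
  · rintro ⟨u, v, x, y⟩ ⟨h, hu, hu', hv, hv', hx, hx', hy, hy'⟩
    dsimp only at h hu hu' hv hv' hx hx' hy hy'
    simp only [F, mem_coe, mem_product, mem_univ, and_true, mem_energyTuples]
    refine ⟨⟨by omega, by omega⟩, ⟨by nlinarith, by nlinarith⟩, ⟨hx, hx'⟩, ⟨hy, hy'⟩, ?_⟩
    rw [← ZMod.intCast_zmod_eq_zero_iff_dvd, tupleG]
    push_cast
    simpa using normForm_sq_eq_zero h
  · rintro ⟨u, v, x, y⟩ ⟨h, -⟩ ⟨u', v', x', y'⟩ ⟨h', -⟩ he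
    simp only [F, Prod.mk.injEq, sign, decide_eq_decide] at he
    obtain ⟨⟨hs, hp, hx, hy⟩, hu, hv, hx', hle⟩ := he
    obtain ⟨hu2, hv2⟩ := Nat.eq_of_add_eq_of_mul_eq hs hp hle
    have hsq : ∀ {a b : ZMod q}, (a ^ 2).val = (b ^ 2).val → a ^ 2 = b ^ 2 :=
      fun h => ZMod.val_injective q h
    obtain rfl := ZMod.eq_of_sq_eq_of_two_mul_val_lt_iff hq (hsq hu2) hu
    obtain rfl := ZMod.eq_of_sq_eq_of_two_mul_val_lt_iff hq (hsq hv2) hv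
    obtain rfl := ZMod.eq_of_sq_eq_of_two_mul_val_lt_iff hq (hsq hx) hx'
    obtain rfl : y = y' := by linear_combination h' - h
    rfl
  · rw [Set.ncard_coe_finset, card_product, card_univ]
    simp [mul_comm]

theorem card_filter_energyTuples_gap_eq_zero_le {q N : ℕ} (hq : q.Prime) (hodd : Odd q)
    (hNq : N ^ 2 ≤ q) : #{t ∈ energyTuples q N | tupleGap t = 0} ≤ 5 * N ^ 2 := by
  have hq16 : IsCoprime (q : ℤ) 16 :=
    Nat.isCoprime_iff_coprime.mpr ((Nat.coprime_two_right.mpr hodd).pow_right 4)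
  let j : ℕ × ℕ × ℕ × ℕ → ℤ := fun t => ((t.2.2.1 : ℤ) * t.2.2.2 - t.2.1) / q
  have hj : ∀ t ∈ {t ∈ energyTuples q N | tupleGap t = 0}, tupleGap t = 0 ∧
      (q : ℤ) * j t = t.2.2.1 * t.2.2.2 - t.2.1 ∧ -2 ≤ j t ∧ j t ≤ 2 := by
    rintro ⟨s, p, c, d⟩ ht
    obtain ⟨ht, hk⟩ := mem_filter.mp ht
    obtain ⟨hs, hs', hp, hcd⟩ := energyTuples_int_bounds ht
    have hG := (mem_energyTuples.mp ht).2.2.2.2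
    rw [tupleG, show (s : ℤ) = c + d by simp only [tupleGap] at hk; omega, normForm_self_left] at hG
    have hqj := Int.mul_ediv_cancel' (Int.Prime.dvd_pow' hq (hq16.dvd_of_dvd_mul_left hG))
    have hNq' : (N : ℤ) ^ 2 ≤ q := by exact_mod_cast hNq
    refine ⟨hk, hqj, ?_, ?_⟩ <;> by_contra! <;> nlinarith
  calc #{t ∈ energyTuples q N | tupleGap t = 0}
      ≤ #(Ico N (2 * N) ×ˢ Ico N (2 * N) ×ˢ Icc (-2 : ℤ) 2) := by
        refine card_le_card_of_injOn (fun t => (t.2.2.1, t.2.2.2, j t)) ?_ ?_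
        · intro t ht
          obtain ⟨-, -, hj₁, hj₂⟩ := hj t ht
          obtain ⟨-, -, hc, hd, -⟩ := mem_energyTuples.mp (mem_filter.mp ht).1
          simp_all
        · rintro ⟨s, p, c, d⟩ ht ⟨s', p', c', d'⟩ ht' he
          obtain ⟨hs, hp, -⟩ := hj _ ht
          obtain ⟨hs', hp', -⟩ := hj _ ht'
          simp only [tupleGap, Prod.mk.injEq] at he hs hp hs' hp' ⊢
          obtain ⟨rfl, rfl, he⟩ := he
          rw [he] at hp
          exact ⟨by omega, by omega, rfl, rfl⟩
    _ = 5 * N ^ 2 := by simp [two_mul]; ring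

theorem card_fiber_le_two_mul_card_divisors_sq (A : Finset (ℕ × ℕ × ℕ × ℕ)) (n : ℕ) (w : ℤ) :
    #{t ∈ A | 0 < t.2.2.1 ∧ 0 < t.2.2.2 ∧ tupleGap t ≠ 0 ∧
        16 * tupleGap t ^ 2 * (t.2.2.1 * t.2.2.2) = n ∧ tupleW t = w} ≤ 2 * #n.divisors ^ 2 := by
  calc _ ≤ #(n.divisors ×ˢ (univ : Finset Bool) ×ˢ n.divisors) := by
        refine card_le_card_of_injOn
          (fun t => ((tupleGap t).natAbs, decide (0 < tupleGap t), t.2.2.1)) ?_ ?_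
        · rintro ⟨s, p, c, d⟩ ht
          simp only [mem_coe, mem_filter] at ht
          obtain ⟨-, hc, hd, hk, hn, -⟩ := ht
          have hn0 : n ≠ 0 := by
            have : (0 : ℤ) < n := hn ▸ by positivity
            omega
          simp only [mem_coe, mem_product, Nat.mem_divisors, mem_univ, true_and]
          refine ⟨⟨?_, hn0⟩, ?_, hn0⟩
          · simpa using Int.natAbs_dvd_natAbs.mpr
              (⟨16 * tupleGap _ * (c * d), by rw [← hn]; ring⟩ : tupleGap (s, p, c, d) ∣ n)
          · exact Int.natCast_dvd_natCast.mp
              ⟨16 * tupleGap (s, p, c, d) ^ 2 * d, by rw [← hn]; ring⟩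
        · rintro ⟨s, p, c, d⟩ ht ⟨s', p', c', d'⟩ ht' he
          simp only [mem_coe, mem_filter] at ht ht'
          obtain ⟨-, hc, hd, hk, hn, hw⟩ := ht
          obtain ⟨-, -, hd', hk', hn', hw'⟩ := ht'
          simp only [Prod.mk.injEq, decide_eq_decide] at he
          obtain ⟨habs, hsign, rfl⟩ := he
          have hgap : tupleGap (s, p, c, d) = tupleGap (s', p', c, d') := by omega
          obtain rfl : d = d' := by
            have h₀ := (hgap ▸ hn).trans hn'.symm
            have h : 16 * tupleGap (s', p', c, d') ^ 2 * c * d =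
                16 * tupleGap (s', p', c, d') ^ 2 * c * d' := by
              linear_combination h₀
            exact_mod_cast mul_left_cancel₀ (by positivity) h
          obtain rfl : s = s' := by simp only [tupleGap] at hgap; omega
          obtain rfl : p = p' := by
            unfold tupleW normFormW at hw hw'
            have : 4 * (p : ℤ) = 4 * p' := by linear_combination hw' - hw
            omega
          rfl
    _ = 2 * #n.divisors ^ 2 := by simp; ring

theorem tupleG_div_tupleW_mem {q N s p c d : ℕ} (hq : 0 < q)
    (ht : (s, p, c, d) ∈ energyTuples q N) :
    (tupleG (s, p, c, d) / q, tupleW (s, p, c, d)) ∈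
      Icc (-((256 * N ^ 4 / q : ℕ) : ℤ)) (256 * N ^ 4 / q : ℕ) ×ˢ
        Icc (-(16 * N ^ 2 : ℤ)) (16 * N ^ 2) := by
  obtain ⟨hs, hs', hp, hp'⟩ := energyTuples_int_bounds ht
  set m := tupleG (s, p, c, d) / q
  have hm : m.natAbs * q ≤ 256 * N ^ 4 := by
    have : |tupleG (s, p, c, d)| ≤ 256 * N ^ 4 := abs_normForm_le hs hs' hp hp'
    rw [← Int.mul_ediv_cancel' (mem_energyTuples.mp ht).2.2.2.2, abs_mul, mul_comm] at this
    zify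
    simpa using this
  have hm' : |m| ≤ (256 * N ^ 4 / q : ℕ) := by
    rw [← Int.natCast_natAbs]
    exact_mod_cast (Nat.le_div_iff_mul_le hq).mpr hm
  exact mem_product.mpr ⟨mem_Icc.mpr (abs_le.mp hm'),
    mem_Icc.mpr (abs_le.mp (abs_normFormW_le hs hs' hp hp'))⟩

theorem card_energyTuples_fiber_le {q N D : ℕ} (hD : ∀ n ≤ 256 * N ^ 4, #n.divisors ≤ D)
    (m w : ℤ) :
    #{t ∈ {t ∈ energyTuples q N | tupleGap t ≠ 0} | (tupleG t / q, tupleW t) = (m, w)} ≤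
      2 * D ^ 2 := by
  have hfiber : ∀ t ∈ {t ∈ {t ∈ energyTuples q N | tupleGap t ≠ 0} |
      (tupleG t / q, tupleW t) = (m, w)}, t ∈ energyTuples q N ∧ 0 < t.2.2.1 ∧ 0 < t.2.2.2 ∧
        tupleGap t ≠ 0 ∧ 16 * tupleGap t ^ 2 * (t.2.2.1 * t.2.2.2) = w ^ 2 - q * m ∧
        tupleW t = w := by
    rintro ⟨s, p, c, d⟩ ht
    simp only [mem_filter, Prod.mk.injEq] at ht
    obtain ⟨⟨ht, hk⟩, rfl, rfl⟩ := ht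
    obtain ⟨-, -, hc, hd, hdvd⟩ := mem_energyTuples.mp ht
    refine ⟨ht, by dsimp only; omega, by dsimp only; omega, hk, ?_, rfl⟩
    rw [Int.mul_ediv_cancel' hdvd, tupleW_sq_sub_tupleG]
  by_contra! hlt
  obtain ⟨⟨s, p, c, d⟩, ht₀⟩ := card_pos.mp (Nat.zero_lt_of_lt hlt)
  obtain ⟨ht₀, -, -, -, hn₀, -⟩ := hfiber _ ht₀
  obtain ⟨hs, hs', -, hcd⟩ := energyTuples_int_bounds ht₀
  have hk := sq_sub_lt_four_mul_sq hs hs'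
  set n := (w ^ 2 - q * m).toNat
  have hn : (n : ℤ) = w ^ 2 - q * m := Int.toNat_of_nonneg (hn₀ ▸ by positivity)
  have hnN : n ≤ 256 * N ^ 4 := by
    have : (n : ℤ) ≤ 256 * N ^ 4 := by rw [hn, ← hn₀]; unfold tupleGap; nlinarith
    exact_mod_cast this
  refine hlt.not_ge ?_
  calc _ ≤ #{t ∈ energyTuples q N | 0 < t.2.2.1 ∧ 0 < t.2.2.2 ∧ tupleGap t ≠ 0 ∧
          16 * tupleGap t ^ 2 * (t.2.2.1 * t.2.2.2) = n ∧ tupleW t = w} := by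
        refine card_le_card fun t ht => ?_
        obtain ⟨htE, hc, hd, hk, htn, htw⟩ := hfiber t ht
        exact mem_filter.mpr ⟨htE, hc, hd, hk, htn.trans hn.symm, htw⟩
    _ ≤ 2 * #n.divisors ^ 2 := card_fiber_le_two_mul_card_divisors_sq _ n w
    _ ≤ 2 * D ^ 2 := by gcongr; exact hD n hnN

theorem card_filter_energyTuples_gap_ne_zero_le {q N D : ℕ} (hq : 0 < q)
    (hD : ∀ n ≤ 256 * N ^ 4, #n.divisors ≤ D) :
    #{t ∈ energyTuples q N | tupleGap t ≠ 0} ≤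
      2 * D ^ 2 * ((2 * (256 * N ^ 4 / q) + 1) * (32 * N ^ 2 + 1)) := by
  set M := 256 * N ^ 4 / q
  refine (card_le_mul_card_image_of_maps_to (f := fun t => (tupleG t / q, tupleW t))
    (t := Icc (-(M : ℤ)) M ×ˢ Icc (-(16 * N ^ 2 : ℤ)) (16 * N ^ 2))
    (fun ⟨_, _, _, _⟩ ht => tupleG_div_tupleW_mem hq (mem_filter.mp ht).1) (2 * D ^ 2)
    fun ⟨m, w⟩ _ => card_energyTuples_fiber_le hD m w).trans_eq ?_
  have hM : ((M : ℤ) + 1 - -M).toNat = 2 * M + 1 := by omega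
  have hW : (16 * (N : ℤ) ^ 2 + 1 - -(16 * N ^ 2)).toNat = 32 * N ^ 2 + 1 := by
    rw [show 16 * (N : ℤ) ^ 2 = ((16 * N ^ 2 : ℕ) : ℤ) by push_cast; ring]
    omega
  rw [card_product, Int.card_Icc, Int.card_Icc, hM, hW]

theorem EqN_le_of_card_divisors_le {q N D : ℕ} (hq : q.Prime) (hodd : Odd q) (hNq : N ^ 2 ≤ q)
    (hD : ∀ n ≤ 256 * N ^ 4, #n.divisors ≤ D) :
    EqN q N ≤ 16 * (5 * N ^ 2 + 2 * D ^ 2 * ((2 * (256 * N ^ 4 / q) + 1) * (32 * N ^ 2 + 1))) := by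
  have : Fact q.Prime := ⟨hq⟩
  calc EqN q N ≤ 16 * #(energyTuples q N) := EqN_le_card_energyTuples hodd N
    _ ≤ _ := by
      rw [← card_filter_add_card_filter_not fun t => tupleGap t = 0]
      gcongr
      · exact card_filter_energyTuples_gap_eq_zero_le hq hodd hNq
      · exact card_filter_energyTuples_gap_ne_zero_le hq.pos hD

theorem exists_card_divisors_le_rpow_of_sq_le {ε : ℝ} (hε : 0 < ε) :
    ∃ K : ℝ, 0 < K ∧ ∀ q N : ℕ, N ^ 2 ≤ q → ∀ n ≤ 256 * N ^ 4,
      (#n.divisors : ℝ) ≤ K * (q : ℝ) ^ (ε / 2) := by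
  obtain ⟨C, hC, hdiv⟩ := exists_card_divisors_le_mul_rpow (by positivity : 0 < ε / 4)
  refine ⟨C * 256 ^ (ε / 4), by positivity, fun q N hNq n hn => ?_⟩
  rcases eq_or_ne n 0 with rfl | hn0
  · simp only [Nat.divisors_zero, card_empty, Nat.cast_zero]
    positivity
  have hn' : (n : ℝ) ≤ 256 * (q : ℝ) ^ 2 := by
    have : n ≤ 256 * q ^ 2 := hn.trans (by rw [show N ^ 4 = (N ^ 2) ^ 2 by ring]; gcongr)
    exact_mod_cast this
  calc (#n.divisors : ℝ) ≤ C * (n : ℝ) ^ (ε / 4) := hdiv n hn0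
    _ ≤ C * (256 * (q : ℝ) ^ 2) ^ (ε / 4) := by gcongr
    _ = C * 256 ^ (ε / 4) * (q : ℝ) ^ (ε / 2) := by
      rw [Real.mul_rpow (by norm_num) (by positivity), ← Real.rpow_natCast_mul (by positivity)]
      ring_nf

theorem sq_le_of_le_rpow_one_half {N q : ℕ} (h : (N : ℝ) ≤ (q : ℝ) ^ ((1 : ℝ) / 2)) :
    N ^ 2 ≤ q := by
  have := pow_le_pow_left₀ (Nat.cast_nonneg N) h 2
  rw [← Real.rpow_mul_natCast (Nat.cast_nonneg q)] at this
  norm_num at this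
  exact_mod_cast this

theorem EqN_le_mul_rpow {ε K : ℝ} (hε : 0 < ε) (hK : 0 ≤ K) {q N : ℕ} (hq : q.Prime) (hodd : Odd q)
    (hN : 1 ≤ N) (hNq : N ^ 2 ≤ q)
    (hdiv : ∀ n ≤ 256 * N ^ 4, (#n.divisors : ℝ) ≤ K * (q : ℝ) ^ (ε / 2)) :
    (EqN q N : ℝ) ≤
      (80 + 2 ^ 20 * K ^ 2) *
        ((N : ℝ) ^ 6 * (q : ℝ) ^ (-(1 : ℝ) + ε) + (N : ℝ) ^ 2 * (q : ℝ) ^ ε) := by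
  have hq0 : (0 : ℝ) < q := by exact_mod_cast hq.pos
  set D := ⌊K * (q : ℝ) ^ (ε / 2)⌋₊
  have hcount := EqN_le_of_card_divisors_le hq hodd hNq (D := D)
    fun n hn => Nat.le_floor (hdiv n hn)
  have hD : (D : ℝ) ^ 2 ≤ K ^ 2 * (q : ℝ) ^ ε := by
    calc (D : ℝ) ^ 2 ≤ (K * (q : ℝ) ^ (ε / 2)) ^ 2 := by gcongr; exact Nat.floor_le (by positivity)
      _ = K ^ 2 * (q : ℝ) ^ ε := by rw [mul_pow, ← Real.rpow_mul_natCast hq0.le]; ring_nf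
  have hM : ((256 * N ^ 4 / q : ℕ) : ℝ) ≤ 256 * (N : ℝ) ^ 4 / q := by
    have := Nat.cast_div_le (α := ℝ) (m := 256 * N ^ 4) (n := q)
    push_cast at this
    exact this
  have hN1 : (1 : ℝ) ≤ N := by exact_mod_cast hN
  have hqε : 1 ≤ (q : ℝ) ^ ε := Real.one_le_rpow (by exact_mod_cast hq.one_lt.le) hε.le
  rw [Real.rpow_add hq0, Real.rpow_neg_one]
  calc (EqN q N : ℝ)
      ≤ 16 * (5 * N ^ 2 +
          2 * D ^ 2 * ((2 * ((256 * N ^ 4 / q : ℕ) : ℝ) + 1) * (32 * N ^ 2 + 1))) := by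
        exact_mod_cast hcount
    _ ≤ 16 * (5 * N ^ 2 + 2 * (K ^ 2 * q ^ ε) * ((2 * (256 * N ^ 4 / q) + 1) * (33 * N ^ 2))) := by
        gcongr; nlinarith
    _ = 80 * N ^ 2 + 1056 * K ^ 2 * (512 * (N ^ 6 * ((q : ℝ)⁻¹ * q ^ ε)) + N ^ 2 * q ^ ε) := by
        field_simp; ring
    _ ≤ (80 + 2 ^ 20 * K ^ 2) * (N ^ 6 * ((q : ℝ)⁻¹ * q ^ ε) + N ^ 2 * q ^ ε) := by
        nlinarith [show (0 : ℝ) ≤ N ^ 6 * ((q : ℝ)⁻¹ * q ^ ε) by positivity, sq_nonneg K,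
          show (0 : ℝ) ≤ N ^ 2 * q ^ ε by positivity]

theorem stmt14 :
    ∀ ε : ℝ, 0 < ε → ∃ C : ℝ, 0 < C ∧
      ∀ q : ℕ, q.Prime → Odd q →
      ∀ N : ℕ, 1 ≤ N → (N : ℝ) ≤ (q : ℝ) ^ ((1 : ℝ)/2) →
        (EqN q N : ℝ) ≤
          C * ((N : ℝ) ^ 6 * (q : ℝ) ^ (-(1 : ℝ) + ε) + (N : ℝ) ^ 2 * (q : ℝ) ^ ε) := by
  intro ε hε
  obtain ⟨K, hK, hdiv⟩ := exists_card_divisors_le_rpow_of_sq_le hε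
  refine ⟨80 + 2 ^ 20 * K ^ 2, by positivity, fun q hq hodd N hN hNq => ?_⟩
  have hNq' := sq_le_of_le_rpow_one_half hNq
  exact EqN_le_mul_rpow hε hK.le hq hodd hN hNq' (hdiv q N hNq')
end
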